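/- Let h be an integrable function on the circle of circumference 2 (AddCircle 2) whose Fourier coefficients satisfy ĥ(n) = (1/2)·(1 + 0.0009·n²)^{−2} for all n ∈ ℤ, where ĥ(n) = (1/2)∫ over one period of h(x)·exp(−πinx) dx. Then for every u ∈ L²(AddCircle 2), the periodic convolution h ⋆ u, defined by (h ⋆ u)(x) = ∫ over one period of h(x − z)u(z) dz, lies in L² and satisfies ‖h ⋆ u‖_{L²} ≤ ‖u‖_{L²}; moreover equality holds for nonzero constant functions u, so the induced linear operator u ↦ h ⋆ u on L²(AddCircle 2) has operator norm exactly 1. -/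

import Mathlib

/-!
The operator is convolution with `h`, and on the circle convolution multiplies Fourier
coefficients: `(h ⋆ u)^(n) = 2 ĥ(n) û(n)`. The multiplier `2 ĥ(n) = (1 + 0.0009 n²)⁻²` lies
in `[0, 1]`, so Parseval gives `‖h ⋆ u‖₂ ≤ ‖u‖₂`, once Young's inequality `‖h ⋆ u‖₂ ≤ ‖h‖₁ ‖u‖₂`
has put `h ⋆ u` in `L²`. Since `∫ h = 2 ĥ(0) = 1`, constants are fixed by the convolution.
-/

open MeasureTheory

instance : Fact ((0:ℝ) < 2) := ⟨by norm_num⟩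

open ContinuousLinearMap
open scoped ENNReal Convolution

lemma MeasureTheory.sq_eLpNorm_two {α E : Type*} [MeasurableSpace α] [NormedAddCommGroup E]
    {μ : Measure α} (f : α → E) : eLpNorm f 2 μ ^ 2 = ∫⁻ a, ‖f a‖ₑ ^ 2 ∂μ := by
  simpa [ENNReal.rpow_two] using eLpNorm_nnreal_pow_eq_lintegral (μ := μ) (f := f) (p := 2)
    two_ne_zero

lemma ENNReal.lintegral_mul_sq_le {α : Type*} [MeasurableSpace α] {μ : Measure α}
    {w f : α → ℝ≥0∞} (hw : AEMeasurable w μ) (hf : AEMeasurable f μ) :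
    (∫⁻ a, w a * f a ∂μ) ^ 2 ≤ (∫⁻ a, w a ∂μ) * ∫⁻ a, w a * f a ^ 2 ∂μ := by
  have holder := ENNReal.lintegral_mul_norm_pow_le (g := fun a => w a * f a ^ 2) hw
    (hw.mul (hf.pow_const 2)) (p := 2⁻¹) (q := 2⁻¹) (by norm_num) (by norm_num) (by norm_num)
  have split : ∀ a, w a ^ (2⁻¹ : ℝ) * (w a * f a ^ 2) ^ (2⁻¹ : ℝ) = w a * f a := fun a => by
    rw [ENNReal.mul_rpow_of_nonneg _ _ (by norm_num), ← mul_assoc,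
      ← ENNReal.rpow_add_of_nonneg _ _ (by norm_num) (by norm_num), ← ENNReal.rpow_natCast,
      ← ENNReal.rpow_mul]
    norm_num
  simp only [split] at holder
  calc (∫⁻ a, w a * f a ∂μ) ^ 2
      ≤ ((∫⁻ a, w a ∂μ) ^ (2⁻¹ : ℝ) * (∫⁻ a, w a * f a ^ 2 ∂μ) ^ (2⁻¹ : ℝ)) ^ 2 :=
        pow_le_pow_left' holder 2
    _ = (∫⁻ a, w a ∂μ) * ∫⁻ a, w a * f a ^ 2 ∂μ := by
        rw [mul_pow, ← ENNReal.rpow_natCast, ← ENNReal.rpow_natCast, ← ENNReal.rpow_mul,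
          ← ENNReal.rpow_mul]
        norm_num

section Convolution

variable {G 𝕜 : Type*} [MeasurableSpace G] [AddGroup G] [RCLike 𝕜] {μ : Measure G}
  {f g : G → 𝕜}

lemma mul_convolution_of_map_add {χ : G → 𝕜} (hχ : ∀ a b, χ (a + b) = χ a * χ b) (x : G) :
    χ x * (f ⋆[mul 𝕜 𝕜, μ] g) x
      = ((fun t => χ t * f t) ⋆[mul 𝕜 𝕜, μ] fun t => χ t * g t) x := by
  simp only [convolution_mul, ← integral_const_mul]
  congr 1 with t
  rw [show χ x = χ (x - t) * χ t by rw [← hχ, sub_add_cancel]]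
  ring

variable [MeasurableAdd₂ G] [MeasurableNeg G] [SFinite μ] [μ.IsAddRightInvariant]

lemma enorm_convolution_sq_le (hf : AEStronglyMeasurable f μ) (hg : AEStronglyMeasurable g μ)
    (x : G) :
    ‖(f ⋆[mul 𝕜 𝕜, μ] g) x‖ₑ ^ 2 ≤ eLpNorm f 1 μ * ∫⁻ t, ‖f t‖ₑ * ‖g (x - t)‖ₑ ^ 2 ∂μ := by
  have hgx : AEMeasurable (fun t => ‖g (x - t)‖ₑ) μ :=
    (hg.comp_quasiMeasurePreserving
      (quasiMeasurePreserving_sub_left_of_right_invariant μ x)).enorm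
  have triangle : ‖(f ⋆[mul 𝕜 𝕜, μ] g) x‖ₑ ≤ ∫⁻ t, ‖f t‖ₑ * ‖g (x - t)‖ₑ ∂μ := by
    rw [convolution_mul]
    simpa only [enorm_mul] using enorm_integral_le_lintegral_enorm (fun t => f t * g (x - t))
  rw [eLpNorm_one_eq_lintegral_enorm]
  exact (pow_le_pow_left' triangle 2).trans (ENNReal.lintegral_mul_sq_le hf.enorm hgx)

lemma eLpNorm_two_convolution_le (hf : AEStronglyMeasurable f μ)
    (hg : AEStronglyMeasurable g μ) :
    eLpNorm (f ⋆[mul 𝕜 𝕜, μ] g) 2 μ ≤ eLpNorm f 1 μ * eLpNorm g 2 μ := by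
  have hprod : AEMeasurable (fun p : G × G => ‖f p.2‖ₑ * ‖g (p.1 - p.2)‖ₑ ^ 2) (μ.prod μ) :=
    hf.comp_snd.enorm.mul ((hg.comp_quasiMeasurePreserving
      (quasiMeasurePreserving_sub_of_right_invariant μ μ)).enorm.pow_const 2)
  have translate : ∀ t, ∫⁻ x, ‖f t‖ₑ * ‖g (x - t)‖ₑ ^ 2 ∂μ = ‖f t‖ₑ * eLpNorm g 2 μ ^ 2 :=
    fun t => by
      rw [lintegral_const_mul' _ _ enorm_ne_top, sq_eLpNorm_two,
        lintegral_sub_right_eq_self (fun y => ‖g y‖ₑ ^ 2) t]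
  refine (ENNReal.pow_le_pow_left_iff two_ne_zero).mp ?_
  calc eLpNorm (f ⋆[mul 𝕜 𝕜, μ] g) 2 μ ^ 2
      ≤ ∫⁻ x, eLpNorm f 1 μ * ∫⁻ t, ‖f t‖ₑ * ‖g (x - t)‖ₑ ^ 2 ∂μ ∂μ := by
        rw [sq_eLpNorm_two]
        exact lintegral_mono fun x => enorm_convolution_sq_le hf hg x
    _ = eLpNorm f 1 μ * ∫⁻ t, ∫⁻ x, ‖f t‖ₑ * ‖g (x - t)‖ₑ ^ 2 ∂μ ∂μ := by
        rw [lintegral_const_mul'' _ hprod.lintegral_prod_right', lintegral_lintegral_swap hprod]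
    _ = (eLpNorm f 1 μ * eLpNorm g 2 μ) ^ 2 := by
        simp_rw [translate]
        rw [lintegral_mul_const'' _ hf.enorm, ← eLpNorm_one_eq_lintegral_enorm]
        ring

lemma MeasureTheory.Integrable.memLp_two_convolution (hf : Integrable f μ) (hg : MemLp g 2 μ) :
    MemLp (f ⋆[mul 𝕜 𝕜, μ] g) 2 μ :=
  ⟨(hf.aestronglyMeasurable.convolution_integrand _ hg.aestronglyMeasurable).integral_prod_right',
    (eLpNorm_two_convolution_le hf.aestronglyMeasurable hg.aestronglyMeasurable).trans_lt
      (ENNReal.mul_lt_top (memLp_one_iff_integrable.mpr hf).eLpNorm_lt_top hg.eLpNorm_lt_top)⟩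

end Convolution

section Fourier

variable {T : ℝ} [hT : Fact (0 < T)]

lemma fourierCoeff_eq_inv_mul_integral (f : AddCircle T → ℂ) (n : ℤ) :
    fourierCoeff f n = (T : ℂ)⁻¹ * ∫ t, fourier (-n) t * f t := by
  rw [fourierCoeff, AddCircle.integral_haarAddCircle, Complex.real_smul]
  push_cast
  simp only [smul_eq_mul]

lemma fourierCoeff_zero_eq (f : AddCircle T → ℂ) : fourierCoeff f 0 = (T : ℂ)⁻¹ * ∫ t, f t := by
  simp [fourierCoeff_eq_inv_mul_integral]

lemma MeasureTheory.Integrable.fourier_mul {f : AddCircle T → ℂ} (hf : Integrable f) (n : ℤ) :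
    Integrable (fun t => fourier n t * f t) :=
  hf.bdd_mul (c := 1) (map_continuous (fourier n)).aestronglyMeasurable
    (ae_of_all _ fun t => by rw [fourier_apply, Circle.norm_coe])

lemma fourierCoeff_convolution {f g : AddCircle T → ℂ} (hf : Integrable f) (hg : Integrable g)
    (n : ℤ) :
    fourierCoeff (f ⋆[mul ℂ ℂ] g) n = T * (fourierCoeff f n * fourierCoeff g n) := by
  have hχ : ∀ a b : AddCircle T, fourier (-n) (a + b) = fourier (-n) a * fourier (-n) b :=
    fun a b => by simp only [fourier_apply, smul_add, AddCircle.toCircle_add, Circle.coe_mul]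
  have hT0 : (T : ℂ) ≠ 0 := Complex.ofReal_ne_zero.mpr hT.out.ne'
  simp only [fourierCoeff_eq_inv_mul_integral, mul_convolution_of_map_add hχ,
    integral_convolution (mul ℂ ℂ) (hf.fourier_mul _) (hg.fourier_mul _), mul_apply']
  field_simp

lemma MeasureTheory.MemLp.hasSum_sq_fourierCoeff {f : AddCircle T → ℂ} (hf : MemLp f 2) :
    HasSum (fun n => ‖fourierCoeff f n‖ ^ 2) (T⁻¹ * ∫ t, ‖f t‖ ^ 2) := by
  have hF := hf.haarAddCircle.coeFn_toLp
  convert _root_.hasSum_sq_fourierCoeff (hf.haarAddCircle.toLp f) using 1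
  · rw [fourierCoeff_congr_ae hF]
  · have hnorm : ∫ t, ‖hf.haarAddCircle.toLp f t‖ ^ 2 ∂AddCircle.haarAddCircle
        = ∫ t, ‖f t‖ ^ 2 ∂AddCircle.haarAddCircle :=
      integral_congr_ae (hF.mono fun t ht => by simp only [ht])
    rw [hnorm, AddCircle.integral_haarAddCircle, smul_eq_mul]

lemma eLpNorm_two_le_of_norm_fourierCoeff_le {f g : AddCircle T → ℂ} (hf : MemLp f 2)
    (hg : MemLp g 2) (hfg : ∀ n, ‖fourierCoeff f n‖ ≤ ‖fourierCoeff g n‖) :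
    eLpNorm f 2 volume ≤ eLpNorm g 2 volume := by
  have hint : ∫ t, ‖f t‖ ^ 2 ≤ ∫ t, ‖g t‖ ^ 2 :=
    le_of_mul_le_mul_left (hasSum_le (fun n => pow_le_pow_left₀ (norm_nonneg _) (hfg n) 2)
      hf.hasSum_sq_fourierCoeff hg.hasSum_sq_fourierCoeff) (inv_pos.mpr hT.out)
  rw [hf.eLpNorm_eq_integral_rpow_norm two_ne_zero ENNReal.ofNat_ne_top,
    hg.eLpNorm_eq_integral_rpow_norm two_ne_zero ENNReal.ofNat_ne_top]
  simp only [ENNReal.toReal_ofNat, Real.rpow_two]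
  gcongr

lemma eLpNorm_two_convolution_le_of_norm_mul_fourierCoeff_le_one {f g : AddCircle T → ℂ}
    (hf : Integrable f) (hg : MemLp g 2) (hmult : ∀ n, ‖(T : ℂ) * fourierCoeff f n‖ ≤ 1) :
    eLpNorm (f ⋆[mul ℂ ℂ] g) 2 volume ≤ eLpNorm g 2 volume := by
  refine eLpNorm_two_le_of_norm_fourierCoeff_le (hf.memLp_two_convolution hg) hg fun n => ?_
  rw [fourierCoeff_convolution hf (hg.integrable one_le_two), ← mul_assoc, norm_mul]
  exact mul_le_of_le_one_left (norm_nonneg _) (hmult n)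

end Fourier

/-- Let `h` be an integrable function on the circle `ℝ/2ℤ` whose Fourier coefficients
are `ĥ(n) = (1/2)(1 + 0.0009 n²)^{−2}`.  Then for every `u ∈ L²`, the periodic
convolution `(h ⋆ u)(x) = ∫ h(x − z)u(z) dz` lies in `L²` with
`‖h ⋆ u‖_{L²} ≤ ‖u‖_{L²}`, and equality holds for nonzero constants `u`; hence the
induced operator on `L²(ℝ/2ℤ)` has norm exactly `1`. -/
theorem periodic_convolution_operator_norm_one
    (h : AddCircle (2:ℝ) → ℂ) (hh : Integrable h volume)
    (hcoeff : ∀ n : ℤ, fourierCoeff h n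
      = (((1 + 0.0009 * (n : ℝ) ^ 2) ^ (-2 : ℤ) / 2 : ℝ) : ℂ)) :
    (∀ u : AddCircle (2:ℝ) → ℂ, MemLp u 2 volume →
      MemLp (fun x => ∫ z, h (x - z) * u z) 2 volume
      ∧ eLpNorm (fun x => ∫ z, h (x - z) * u z) 2 volume ≤ eLpNorm u 2 volume)
    ∧ (∀ c : ℂ, c ≠ 0 →
        eLpNorm (fun x : AddCircle (2:ℝ) => ∫ z, h (x - z) * c) 2 volume
          = eLpNorm (fun _ : AddCircle (2:ℝ) => c) 2 volume) := by
  have hconv : ∀ u : AddCircle (2:ℝ) → ℂ, (fun x => ∫ z, h (x - z) * u z) = h ⋆[mul ℂ ℂ] u :=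
    fun u => funext fun x => convolution_mul_swap.symm
  have hmult : ∀ n : ℤ, ‖((2:ℝ) : ℂ) * fourierCoeff h n‖ ≤ 1 := fun n => by
    have hbase : 1 ≤ 1 + 0.0009 * (n : ℝ) ^ 2 := le_add_of_nonneg_right (by positivity)
    rw [hcoeff, ← Complex.ofReal_mul, mul_div_cancel₀ _ two_ne_zero, Complex.norm_real,
      Real.norm_of_nonneg (by positivity)]
    exact zpow_le_one_of_nonpos₀ hbase (by norm_num)
  have hmass : ∫ x, h x = 1 := by
    simpa [hcoeff 0] using (fourierCoeff_zero_eq h).symm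
  refine ⟨fun u hu => ?_, fun c _ => ?_⟩
  · rw [hconv u]
    exact ⟨hh.memLp_two_convolution hu,
      eLpNorm_two_convolution_le_of_norm_mul_fourierCoeff_le_one hh hu hmult⟩
  · congr 1 with x
    rw [integral_mul_const, integral_sub_left_eq_self h volume x, hmass, one_mul]
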